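/- arXiv:1804.04947 — 3 statements merged into one kernel-verified Lean document; each statement's English description precedes it below -/
import Mathlib

section
/- For every t in the closed interval [-1,1] and all nonnegative integers n and k, the Jacobi polynomial with parameters (0,k) satisfies the bound |(1+t)^k · P_n^{(0,k)}(t)| ≤ 2^k. -/
/-! Put `w = (t - 1) / 2`, so that `t ∈ [-1, 1]` becomes `w ∈ [-1, 0]`, `(1 + t) / 2 = w + 1`, and
`P_n^{(0,k)}(t)` becomes the polynomial `Σ_m C(n,m) C(n+k+m,m) w^m`. The contiguous relation
`(2n+k+2) (w+1) P_n^{(0,k+1)} = (n+k+1) P_n^{(0,k)} + (n+1) P_{n+1}^{(0,k)}` exhibits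
`(w+1)^(k+1) P_n^{(0,k+1)}` as a convex combination of `(w+1)^k P_n^{(0,k)}` and
`(w+1)^k P_{n+1}^{(0,k)}`, so induction on `k` reduces the bound to the Legendre case `k = 0`.
There the Legendre equation gives `F' = (2w+1) P'^2` for `F = n(n+1) P^2 - w(w+1) P'^2`, so on
`[-1, 0]` we get `n(n+1) P^2 ≤ F ≤ max (F (-1)) (F 0) = n(n+1)`. -/

/-- The Jacobi polynomial `P_n^{(α,β)}` with nonnegative integer parameters,
as a function of a real variable:
`P_n^{(α,β)}(t) = Σ_{j=0}^{n} C(n+α, n−j) · C(n+β, j) · ((t−1)/2)^j · ((t+1)/2)^{n−j}`. -/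
noncomputable def jacobiP (n α β : ℕ) (t : ℝ) : ℝ :=
  ∑ j ∈ Finset.range (n + 1),
    ((n + α).choose (n - j) : ℝ) * ((n + β).choose j : ℝ) *
      ((t - 1) / 2) ^ j * ((t + 1) / 2) ^ (n - j)

open Polynomial Finset

theorem Nat.sum_range_choose_mul_choose (m N : ℕ) :
    ∑ j ∈ range (m + 1), m.choose j * N.choose j = (N + m).choose m := by
  rw [Nat.add_choose_eq, Nat.sum_antidiagonal_eq_sum_range_succ_mk]
  refine sum_congr rfl fun j hj => ?_
  rw [Nat.choose_symm (mem_range_succ_iff.mp hj), mul_comm]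

theorem Nat.sum_range_choose_mul_choose_mul_choose (n N m : ℕ) :
    ∑ j ∈ range (n + 1), n.choose j * N.choose j * (if j ≤ m then (n - j).choose (m - j) else 0)
      = n.choose m * (N + m).choose m := by
  have hterm : ∀ j ∈ range (n + 1),
      n.choose j * N.choose j * (if j ≤ m then (n - j).choose (m - j) else 0)
        = n.choose m * (m.choose j * N.choose j) := by
    intro j _
    split_ifs with hjm
    · rw [← mul_assoc, Nat.choose_mul hjm]; ring
    · simp [Nat.choose_eq_zero_of_lt (not_le.mp hjm)]
  rw [sum_congr rfl hterm, ← mul_sum, ← Nat.sum_range_choose_mul_choose]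
  rcases le_or_gt m n with hmn | hnm
  · congr 1
    refine (sum_subset (range_subset_range.mpr (by omega)) fun j _ hj => ?_).symm
    simp [Nat.choose_eq_zero_of_lt (by simpa using hj : m < j)]
  · simp [Nat.choose_eq_zero_of_lt hnm]

def jacobiCoeff (n k m : ℕ) : ℕ := n.choose m * (n + k + m).choose m

theorem jacobiCoeff_contiguous (n k m : ℕ) :
    (2 * n + k + 2) * (jacobiCoeff n (k + 1) m + jacobiCoeff n (k + 1) (m + 1)) =
      (n + k + 1) * jacobiCoeff n k (m + 1) + (n + 1) * jacobiCoeff (n + 1) k (m + 1) := by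
  set N := n + k + m + 1
  have hN : n + k + 1 = N - m := by omega
  have key : (n + k + 1) * N.choose m * (n + 1).choose (m + 1) =
      (n + 1) * n.choose m * N.choose (m + 1) := by
    apply Nat.eq_of_mul_eq_mul_right m.succ_pos
    calc (n + k + 1) * N.choose m * (n + 1).choose (m + 1) * (m + 1)
        = N.choose m * (N - m) * ((n + 1).choose (m + 1) * (m + 1)) := by rw [hN]; ring
      _ = N.choose (m + 1) * (m + 1) * ((n + 1) * n.choose m) := by
        rw [← Nat.choose_succ_right_eq, Nat.add_one_mul_choose_eq]
      _ = (n + 1) * n.choose m * N.choose (m + 1) * (m + 1) := by ring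
  -- after Pascal's rule on `C(n+1, m+1)` and `C(N+1, m+1)` the identity reduces to `key`
  simp only [jacobiCoeff, show n + (k + 1) + m = N by omega,
    show n + (k + 1) + (m + 1) = N + 1 by omega, show n + k + (m + 1) = N by omega,
    show n + 1 + k + (m + 1) = N + 1 by omega, Nat.choose_succ_succ' N, Nat.choose_succ_succ' n]
    at key ⊢
  linear_combination key

theorem jacobiCoeff_legendre_recurrence (n m : ℕ) :
    (m + 1) ^ 2 * jacobiCoeff n 0 (m + 1) + m * (m + 1) * jacobiCoeff n 0 m =
      n * (n + 1) * jacobiCoeff n 0 m := by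
  rcases lt_or_ge n m with hnm | hmn
  · simp [jacobiCoeff, Nat.choose_eq_zero_of_lt hnm,
      Nat.choose_eq_zero_of_lt (hnm.trans m.lt_succ_self)]
  have hsq : (n - m) * (n + m + 1) + m * (m + 1) = n * (n + 1) := by
    obtain ⟨d, rfl⟩ := Nat.exists_eq_add_of_le hmn
    rw [Nat.add_sub_cancel_left]; ring
  calc (m + 1) ^ 2 * jacobiCoeff n 0 (m + 1) + m * (m + 1) * jacobiCoeff n 0 m
      = n.choose (m + 1) * (m + 1) * ((n + m + 1).choose (m + 1) * (m + 1))
          + m * (m + 1) * jacobiCoeff n 0 m := by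
        simp only [jacobiCoeff, add_zero, ← add_assoc]; ring
    _ = n.choose m * (n - m) * ((n + m + 1) * (n + m).choose m)
          + m * (m + 1) * jacobiCoeff n 0 m := by
        rw [Nat.choose_succ_right_eq, Nat.add_one_mul_choose_eq]
    _ = ((n - m) * (n + m + 1) + m * (m + 1)) * jacobiCoeff n 0 m := by
        simp only [jacobiCoeff, add_zero]; ring
    _ = n * (n + 1) * jacobiCoeff n 0 m := by rw [hsq]

noncomputable def jacobiPoly (n k : ℕ) : ℝ[X] :=
  ∑ m ∈ range (n + 1), C (jacobiCoeff n k m : ℝ) * X ^ m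

theorem coeff_jacobiPoly (n k m : ℕ) : (jacobiPoly n k).coeff m = jacobiCoeff n k m := by
  simp only [jacobiPoly, finsetSum_coeff, coeff_C_mul_X_pow, sum_ite_eq, mem_range]
  split_ifs with h
  · rfl
  · simp [jacobiCoeff, Nat.choose_eq_zero_of_lt (by omega : n < m)]

theorem jacobiPoly_eq_sum (n k : ℕ) :
    jacobiPoly n k = ∑ j ∈ range (n + 1),
      C ((n.choose j * (n + k).choose j : ℕ) : ℝ) * X ^ j * (X + 1) ^ (n - j) := by
  ext m
  simp only [coeff_jacobiPoly, finsetSum_coeff, mul_assoc, coeff_C_mul, coeff_X_pow_mul',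
    coeff_X_add_one_pow]
  exact_mod_cast (Nat.sum_range_choose_mul_choose_mul_choose n (n + k) m).symm

theorem jacobiP_zero_left (n k : ℕ) (t : ℝ) :
    jacobiP n 0 k t = (jacobiPoly n k).eval ((t - 1) / 2) := by
  rw [jacobiPoly_eq_sum, eval_finsetSum, jacobiP]
  refine sum_congr rfl fun j hj => ?_
  rw [add_zero, Nat.choose_symm (mem_range_succ_iff.mp hj)]
  simp only [eval_mul, eval_C, eval_pow, eval_X, eval_add, eval_one, Nat.cast_mul]
  ring

theorem eval_neg_one_jacobiPoly (n k : ℕ) :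
    (jacobiPoly n k).eval (-1) = (n + k).choose n * (-1) ^ n := by
  rw [jacobiPoly_eq_sum, eval_finsetSum, sum_eq_single_of_mem n (self_mem_range_succ n)]
  · simp
  · intro j hj hjn
    have : n - j ≠ 0 := by have := mem_range_succ_iff.mp hj; omega
    simp [zero_pow this]

theorem eval_zero_jacobiPoly (n k : ℕ) : (jacobiPoly n k).eval 0 = 1 := by
  simp [← coeff_zero_eq_eval_zero, coeff_jacobiPoly, jacobiCoeff]

theorem jacobiPoly_contiguous (n k : ℕ) :
    C (2 * n + k + 2 : ℝ) * ((X + 1) * jacobiPoly n (k + 1)) =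
      C (n + k + 1 : ℝ) * jacobiPoly n k + C (n + 1 : ℝ) * jacobiPoly (n + 1) k := by
  ext j
  have h := jacobiCoeff_contiguous n k (j - 1)
  rcases j with _ | m <;>
  simp only [add_mul, one_mul, coeff_add, coeff_C_mul, coeff_X_mul, coeff_X_mul_zero,
    coeff_jacobiPoly] at h ⊢
  · simp [jacobiCoeff]
    ring
  · simp only [add_tsub_cancel_right] at h
    exact_mod_cast h

theorem jacobiPoly_legendre_ode (n : ℕ) :
    X * (X + 1) * derivative (derivative (jacobiPoly n 0)) +
        (2 * X + 1) * derivative (jacobiPoly n 0) =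
      C (n * (n + 1) : ℝ) * jacobiPoly n 0 := by
  set p := jacobiPoly n 0
  -- each factor `X` shifts the coefficients by one
  have hX : X * (X + 1) * derivative (derivative p) + (2 * X + 1) * derivative p =
      X * (X * derivative (derivative p) + derivative (derivative p) + derivative p + derivative p)
        + derivative p := by ring
  rw [hX]
  ext j
  have h := congrArg (Nat.cast (R := ℝ)) (jacobiCoeff_legendre_recurrence n j)
  rcases j with _ | _ | m <;>
  simp only [coeff_add, coeff_C_mul, coeff_X_mul, coeff_X_mul_zero, coeff_derivative, p,
    coeff_jacobiPoly] at h ⊢ <;>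
  push_cast at h ⊢ <;>
  linear_combination h

theorem le_max_of_deriv_nonpos_of_nonneg {f : ℝ → ℝ} {a b c x : ℝ} (hf : Differentiable ℝ f)
    (hle : ∀ y < c, deriv f y ≤ 0) (hge : ∀ y, c < y → 0 ≤ deriv f y) (hax : a ≤ x)
    (hxb : x ≤ b) : f x ≤ max (f a) (f b) := by
  rcases le_total x c with hxc | hcx
  · have hanti : AntitoneOn f (Set.Iic c) :=
      antitoneOn_of_deriv_nonpos (convex_Iic c) hf.continuous.continuousOn hf.differentiableOn
        fun y hy => hle y (by simpa using hy)
    exact le_max_of_le_left (hanti (hax.trans hxc) hxc hax)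
  · have hmono : MonotoneOn f (Set.Ici c) :=
      monotoneOn_of_deriv_nonneg (convex_Ici c) hf.continuous.continuousOn hf.differentiableOn
        fun y hy => hge y (by simpa using hy)
    exact le_max_of_le_right (hmono hcx (hcx.trans hxb) hxb)

theorem abs_eval_jacobiPoly_zero_le_one (n : ℕ) {w : ℝ} (hw₁ : -1 ≤ w) (hw₀ : w ≤ 0) :
    |(jacobiPoly n 0).eval w| ≤ 1 := by
  rcases Nat.eq_zero_or_pos n with rfl | hn
  · simp [jacobiPoly, jacobiCoeff]
  set p := jacobiPoly n 0
  set lam : ℝ := n * (n + 1)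
  set F : ℝ[X] := C lam * p ^ 2 - X * (X + 1) * derivative p ^ 2
  have hF : ∀ y, deriv (fun x => F.eval x) y = (2 * y + 1) * (derivative p).eval y ^ 2 := by
    have hode : X * (X + 1) * derivative (derivative p) + (2 * X + 1) * derivative p = C lam * p :=
      jacobiPoly_legendre_ode n
    have hF' : derivative F = (2 * X + 1) * derivative p ^ 2 := by
      simp only [F, derivative_sub, derivative_mul, derivative_C, derivative_X, derivative_add,
        derivative_one, derivative_sq, map_ofNat]
      linear_combination (-2 * derivative p) * hode
    intro y
    simp [Polynomial.deriv, hF']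
  have hFw : F.eval w ≤ max (F.eval (-1)) (F.eval 0) := by
    refine le_max_of_deriv_nonpos_of_nonneg (c := -1 / 2) F.differentiable (fun y hy => ?_)
      (fun y hy => ?_) hw₁ hw₀ <;> rw [hF]
    · exact mul_nonpos_of_nonpos_of_nonneg (by linarith) (sq_nonneg _)
    · exact mul_nonneg (by linarith) (sq_nonneg _)
  have hF₁ : F.eval (-1) = lam := by simp [F, p, eval_neg_one_jacobiPoly, ← pow_mul]
  have hF₀ : F.eval 0 = lam := by simp [F, p, eval_zero_jacobiPoly]
  have hpw : lam * p.eval w ^ 2 ≤ lam := by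
    rw [hF₁, hF₀, max_self] at hFw
    simp only [F, eval_sub, eval_mul, eval_C, eval_pow, eval_X, eval_add, eval_one] at hFw
    have hw : w * (w + 1) ≤ 0 := mul_nonpos_of_nonpos_of_nonneg hw₀ (by linarith)
    nlinarith [mul_nonpos_of_nonpos_of_nonneg hw (sq_nonneg ((derivative p).eval w))]
  have hlam : 0 < lam := by positivity
  exact abs_le_one_iff_mul_self_le_one.mpr (by nlinarith)

theorem abs_pow_mul_eval_jacobiPoly_le_one (k n : ℕ) {w : ℝ} (hw₁ : -1 ≤ w) (hw₀ : w ≤ 0) :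
    |(w + 1) ^ k * (jacobiPoly n k).eval w| ≤ 1 := by
  induction k generalizing n with
  | zero => simpa using abs_eval_jacobiPoly_zero_le_one n hw₁ hw₀
  | succ k ih =>
    set A := (w + 1) ^ k * (jacobiPoly n k).eval w
    set B := (w + 1) ^ k * (jacobiPoly (n + 1) k).eval w
    have hrec : (2 * n + k + 2 : ℝ) * ((w + 1) ^ (k + 1) * (jacobiPoly n (k + 1)).eval w) =
        (n + k + 1) * A + (n + 1) * B := by
      have h := congrArg (eval w) (jacobiPoly_contiguous n k)
      simp only [eval_mul, eval_add, eval_C, eval_X, eval_one] at h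
      rw [pow_succ]
      linear_combination (w + 1) ^ k * h
    have hA := abs_le.mp (ih n)
    have hB := abs_le.mp (ih (n + 1))
    have hpos : (0 : ℝ) < 2 * n + k + 2 := by positivity
    have hbound : |(2 * n + k + 2 : ℝ) * ((w + 1) ^ (k + 1) * (jacobiPoly n (k + 1)).eval w)|
        ≤ 2 * n + k + 2 := by
      rw [hrec, abs_le]
      constructor <;> nlinarith
    rwa [abs_mul, abs_of_pos hpos, mul_le_iff_le_one_right hpos] at hbound

/-- For every `t ∈ [-1,1]` and all nonnegative integers `n`, `k`,
`|(1+t)^k · P_n^{(0,k)}(t)| ≤ 2^k`. -/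
theorem abs_one_add_pow_mul_jacobiP_le (t : ℝ) (ht : t ∈ Set.Icc (-1 : ℝ) 1)
    (n k : ℕ) :
    |(1 + t) ^ k * jacobiP n 0 k t| ≤ 2 ^ k := by
  have hw := abs_pow_mul_eval_jacobiPoly_le_one k n (w := (t - 1) / 2)
    (by linarith [ht.1]) (by linarith [ht.2])
  have hscale : (1 + t) ^ k * jacobiP n 0 k t =
      2 ^ k * (((t - 1) / 2 + 1) ^ k * (jacobiPoly n k).eval ((t - 1) / 2)) := by
    rw [jacobiP_zero_left, ← mul_assoc, ← mul_pow]
    ring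
  rw [hscale, abs_mul, abs_of_pos (by positivity)]
  exact mul_le_of_le_one_right (by positivity) hw
end

section
/- For every t in the half-open interval (-1,1] and all nonnegative integers n and s, the Jacobi polynomial with parameters (0,2s) satisfies ((1+t)/2)^s · |P_n^{(0,2s)}(t)| ≤ (2/(1+t))^s. -/
open Polynomial Finset

lemma linpow_eq_sum (a b : ℝ) (n : ℕ) :
    (C a * X + C b) ^ n =
      ∑ i ∈ range (n + 1), C ((n.choose i : ℝ) * a ^ i * b ^ (n - i)) * X ^ i := by
  rw [add_pow]
  refine Finset.sum_congr rfl fun i hi => ?_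
  rw [mul_pow, ← C_pow, ← C_pow, ← C_eq_natCast (n.choose i)]
  rw [C_mul, C_mul]
  ring

lemma sum_C_X_coeff (f : ℕ → ℝ) (m k : ℕ) (hk : k < m) :
    (∑ i ∈ range m, C (f i) * X ^ i).coeff k = f k := by
  rw [finset_sum_coeff, Finset.sum_eq_single k]
  · rw [coeff_C_mul, coeff_X_pow]; simp
  · intro i hi hne
    rw [coeff_C_mul, coeff_X_pow, if_neg (Ne.symm hne), mul_zero]
  · intro h; exact absurd (Finset.mem_range.2 hk) h

lemma linpow_coeff (a b : ℝ) (n k : ℕ) (hk : k ≤ n) :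
    ((C a * X + C b) ^ n).coeff k = (n.choose k : ℝ) * a ^ k * b ^ (n - k) := by
  rw [linpow_eq_sum, sum_C_X_coeff _ _ _ (Nat.lt_succ_of_le hk)]

lemma linpow_natDegree_le' (a b : ℝ) (n : ℕ) :
    ((C a * X + C b) ^ n).natDegree ≤ n := by
  refine (natDegree_pow_le).trans ?_
  have h1 : (C a * X + C b).natDegree ≤ 1 := by
    refine (natDegree_add_le _ _).trans ?_
    simp only [natDegree_C, max_le_iff]
    exact ⟨(natDegree_C_mul_le a X).trans (by simp), Nat.zero_le 1⟩
  calc n * (C a * X + C b).natDegree ≤ n * 1 := Nat.mul_le_mul_left n h1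
    _ = n := by ring

noncomputable def Pp (γ σ : ℝ) (N p : ℕ) : Polynomial ℝ :=
  (C γ * X + C (-σ)) ^ p * (C σ * X + C γ) ^ (N - p)

noncomputable def Aa (γ σ : ℝ) (N p k : ℕ) : ℝ := (Pp γ σ N p).coeff k

lemma Pp_natDegree_le (γ σ : ℝ) (N p : ℕ) (hp : p ≤ N) :
    (Pp γ σ N p).natDegree ≤ N := by
  refine (natDegree_mul_le).trans ?_
  have := linpow_natDegree_le' γ (-σ) p
  have := linpow_natDegree_le' σ γ (N - p)
  omega

lemma Pp_eval (γ σ : ℝ) (N p : ℕ) (u : ℝ) :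
    (Pp γ σ N p).eval u = (γ * u - σ) ^ p * (σ * u + γ) ^ (N - p) := by
  simp [Pp, sub_eq_add_neg]

lemma Pp_eval_sum (γ σ : ℝ) (N p : ℕ) (hp : p ≤ N) (u : ℝ) :
    (Pp γ σ N p).eval u = ∑ k ∈ range (N + 1), Aa γ σ N p k * u ^ k :=
  eval_eq_sum_range' (Nat.lt_succ_of_le (Pp_natDegree_le γ σ N p hp)) u

lemma KL1 (γ σ : ℝ) (N : ℕ) (u : ℝ) :
    ∑ p ∈ range (N + 1), C ((N.choose p : ℝ) * u ^ p) * Pp γ σ N p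
      = (C (γ * u + σ) * X + C (γ - σ * u)) ^ N := by
  have h : C (γ * u + σ) * X + C (γ - σ * u)
      = C u * (C γ * X + C (-σ)) + (C σ * X + C γ) := by
    simp only [C_add, C_sub, C_mul, C_neg]; ring
  rw [h, add_pow]
  refine Finset.sum_congr rfl fun p hp => ?_
  rw [C_mul, mul_pow, ← C_pow, ← C_eq_natCast (N.choose p)]
  unfold Pp
  ring

lemma KL2 (γ σ : ℝ) (N p k : ℕ) (hp : p ≤ N) (hk : k ≤ N) :
    (N.choose p : ℝ) * Aa γ σ N p k = (N.choose k : ℝ) * Aa γ (-σ) N k p := by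
  have key : (∑ q ∈ range (N + 1), C ((N.choose q : ℝ) * Aa γ σ N q k) * X ^ q)
      = C ((N.choose k : ℝ)) * Pp γ (-σ) N k := by
    apply Polynomial.funext
    intro u
    have h1 : ∀ q, eval u (C ((N.choose q : ℝ) * Aa γ σ N q k) * X ^ q)
        = ((N.choose q : ℝ) * u ^ q) * Aa γ σ N q k := by
      intro q; simp; ring
    rw [eval_finset_sum]
    simp only [h1]
    have h2 : ∑ q ∈ range (N + 1), ((N.choose q : ℝ) * u ^ q) * Aa γ σ N q k
        = (∑ q ∈ range (N + 1), C ((N.choose q : ℝ) * u ^ q) * Pp γ σ N q).coeff k := by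
      rw [finset_sum_coeff]
      refine Finset.sum_congr rfl fun q hq => ?_
      rw [coeff_C_mul]; rfl
    rw [h2, KL1, linpow_coeff _ _ _ _ hk]
    rw [eval_mul, eval_C, Pp_eval]
    ring_nf
  have h3 := congrArg (fun f => Polynomial.coeff f p) key
  rw [sum_C_X_coeff _ _ _ (Nat.lt_succ_of_le hp), coeff_C_mul] at h3
  exact h3

lemma KL3 (γ σ : ℝ) (hγσ : γ ^ 2 + σ ^ 2 = 1) (N p : ℕ) (hp : p ≤ N) :
    ∑ k ∈ range (N + 1), Aa γ σ N p k * Aa γ (-σ) N k p = 1 := by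
  have key : (∑ k ∈ range (N + 1), C (Aa γ σ N p k) * Pp γ (-σ) N k) = X ^ p := by
    apply eq_of_infinite_eval_eq
    have hsub : {u : ℝ | γ - σ * u ≠ 0} ⊆
        {u : ℝ | eval u (∑ k ∈ range (N + 1), C (Aa γ σ N p k) * Pp γ (-σ) N k)
          = eval u (X ^ p)} := by
      intro u hu
      simp only [Set.mem_setOf_eq] at hu ⊢
      set x := γ * u + σ with hx
      set y := γ - σ * u with hy
      have hyne : y ≠ 0 := hu
      have heval : ∀ k, eval u (C (Aa γ σ N p k) * Pp γ (-σ) N k)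
          = Aa γ σ N p k * (x ^ k * y ^ (N - k)) := by
        intro k
        rw [eval_mul, eval_C, Pp_eval]
        congr 2
        · ring
        · ring
      rw [eval_finset_sum]
      simp only [heval]
      have hsum : ∑ k ∈ range (N + 1), Aa γ σ N p k * (x ^ k * y ^ (N - k))
          = y ^ N * ∑ k ∈ range (N + 1), Aa γ σ N p k * (x / y) ^ k := by
        rw [Finset.mul_sum]
        refine Finset.sum_congr rfl fun k hk => ?_
        have hkN : k ≤ N := Nat.lt_succ_iff.mp (Finset.mem_range.mp hk)
        rw [div_pow]
        rw [show y ^ N = y ^ (N - k) * y ^ k by rw [← pow_add]; congr 1; omega]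
        field_simp
      rw [hsum, ← Pp_eval_sum γ σ N p hp, Pp_eval]
      have h1 : γ * x - σ * y = u := by rw [hx, hy]; linear_combination u * hγσ
      have h2 : σ * x + γ * y = 1 := by rw [hx, hy]; linear_combination hγσ
      have hgx : γ * (x / y) - σ = u / y := by
        field_simp; linear_combination h1
      have hsx : σ * (x / y) + γ = 1 / y := by
        field_simp; linear_combination h2
      rw [hgx, hsx]
      rw [eval_pow, eval_X, div_pow, div_pow, one_pow]
      rw [show y ^ N = y ^ p * y ^ (N - p) by rw [← pow_add]; congr 1; omega]
      field_simp
    refine Set.Infinite.mono hsub ?_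
    by_cases hσ : σ = 0
    · have hγ : γ ≠ 0 := by intro h; rw [h, hσ] at hγσ; norm_num at hγσ
      have : {u : ℝ | γ - σ * u ≠ 0} = Set.univ := by
        ext u; simp [hσ, hγ]
      rw [this]; exact Set.infinite_univ
    · have hss : {u : ℝ | ¬ (γ - σ * u ≠ 0)} ⊆ {γ / σ} := by
        intro u hu
        simp only [Set.mem_setOf_eq, not_not] at hu
        simp only [Set.mem_singleton_iff]
        field_simp
        linarith [hu]
      have hfin : {u : ℝ | ¬ (γ - σ * u ≠ 0)}.Finite :=
        Set.Finite.subset (Set.finite_singleton _) hss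
      have := hfin.infinite_compl
      simpa [Set.compl_setOf] using this
  have h3 := congrArg (fun f => Polynomial.coeff f p) key
  rw [finset_sum_coeff] at h3
  rw [coeff_X_pow, if_pos rfl] at h3
  rw [← h3]
  refine Finset.sum_congr rfl fun k hk => ?_
  rw [coeff_C_mul]; rfl

lemma KL4 (γ σ : ℝ) (hγσ : γ ^ 2 + σ ^ 2 = 1) (N p : ℕ) (hp : p ≤ N) :
    (Aa γ σ N p p) ^ 2 ≤ 1 := by
  have hcp : (0 : ℝ) < (N.choose p : ℝ) := by
    exact_mod_cast Nat.choose_pos hp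
  have hterm : ∀ k ∈ range (N + 1),
      Aa γ σ N p k * Aa γ (-σ) N k p
        = ((N.choose p : ℝ) / (N.choose k : ℝ)) * (Aa γ σ N p k) ^ 2 := by
    intro k hk
    have hkN : k ≤ N := Nat.lt_succ_iff.mp (Finset.mem_range.mp hk)
    have hck : (0 : ℝ) < (N.choose k : ℝ) := by
      exact_mod_cast Nat.choose_pos hkN
    have h2 := KL2 γ σ N p k hp hkN
    have : Aa γ (-σ) N k p = (N.choose p : ℝ) * Aa γ σ N p k / (N.choose k : ℝ) := by
      field_simp
      linarith [h2]
    rw [this]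
    field_simp
  have hsum : ∑ k ∈ range (N + 1),
      ((N.choose p : ℝ) / (N.choose k : ℝ)) * (Aa γ σ N p k) ^ 2 = 1 := by
    rw [← Finset.sum_congr rfl hterm]
    exact KL3 γ σ hγσ N p hp
  have hnn : ∀ k ∈ range (N + 1),
      0 ≤ ((N.choose p : ℝ) / (N.choose k : ℝ)) * (Aa γ σ N p k) ^ 2 := by
    intro k hk
    have hkN : k ≤ N := Nat.lt_succ_iff.mp (Finset.mem_range.mp hk)
    have hck : (0 : ℝ) < (N.choose k : ℝ) := by exact_mod_cast Nat.choose_pos hkN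
    positivity
  have hmem : p ∈ range (N + 1) := Finset.mem_range.mpr (Nat.lt_succ_of_le hp)
  have hle := Finset.single_le_sum hnn hmem
  rw [hsum] at hle
  have : ((N.choose p : ℝ) / (N.choose p : ℝ)) * (Aa γ σ N p p) ^ 2
      = (Aa γ σ N p p) ^ 2 := by
    rw [div_self (ne_of_gt hcp), one_mul]
  linarith [hle, this.symm.le]

lemma Aa_diag_eq (t : ℝ) (γ σ : ℝ) (hγ : γ ^ 2 = (1 + t) / 2) (hσ : σ ^ 2 = (1 - t) / 2)
    (n s : ℕ) :
    Aa γ σ (n + 2 * s + n) (n + 2 * s) (n + 2 * s)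
      = ((1 + t) / 2) ^ s * jacobiP n 0 (2 * s) t := by
  set p := n + 2 * s with hp
  have hNp : n + 2 * s + n - p = n := by omega
  unfold Aa Pp
  rw [hNp, coeff_mul]
  rw [Finset.Nat.sum_antidiagonal_eq_sum_range_succ_mk]
  rw [← Finset.sum_range_reflect]
  rw [jacobiP, Finset.mul_sum]
  rw [show p + 1 - 1 = p from rfl]
  have hsub : Finset.range (n + 1) ⊆ Finset.range (p + 1) := by
    apply Finset.range_subset_range.mpr; omega
  rw [← Finset.sum_subset hsub]
  · refine Finset.sum_congr rfl fun j hj => ?_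
    have hjn : j ≤ n := Nat.lt_succ_iff.mp (Finset.mem_range.mp hj)
    have hjp : j ≤ p := by omega
    simp only [show p - (p - j) = j by omega, show (p, p-j).1 = p from rfl]
    rw [linpow_coeff γ (-σ) p (p - j) (Nat.sub_le _ _), linpow_coeff σ γ n j hjn]
    rw [show p - (p - j) = j by omega]
    rw [Nat.choose_symm hjp]
    have hgg : γ ^ (p - j) * γ ^ (n - j) = ((1 + t) / 2) ^ s * ((1 + t) / 2) ^ (n - j) := by
      rw [← pow_add, show (p - j) + (n - j) = 2 * (s + (n - j)) by omega, pow_mul, hγ,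
        pow_add]
    have hss : (-σ) ^ j * σ ^ j = ((t - 1) / 2) ^ j := by
      rw [← mul_pow]
      congr 1
      nlinarith [hσ]
    calc ((p.choose j : ℝ) * γ ^ (p - j) * (-σ) ^ j) * ((n.choose j : ℝ) * σ ^ j * γ ^ (n - j))
        = (p.choose j : ℝ) * (n.choose j : ℝ) * ((-σ) ^ j * σ ^ j) * (γ ^ (p - j) * γ ^ (n - j)) := by
          ring
      _ = (p.choose j : ℝ) * (n.choose j : ℝ) * ((t - 1) / 2) ^ j *
          (((1 + t) / 2) ^ s * ((1 + t) / 2) ^ (n - j)) := by rw [hss, hgg]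
      _ = ((1 + t) / 2) ^ s * (((n + 0).choose (n - j) : ℝ) * ((n + 2 * s).choose j : ℝ) *
          ((t - 1) / 2) ^ j * ((t + 1) / 2) ^ (n - j)) := by
          rw [Nat.add_zero, Nat.choose_symm hjn, show (t + 1) / 2 = (1 + t) / 2 by ring]
          ring
  · intro j hjp hjn
    have hj : n < j := by
      simp only [Finset.mem_range] at hjn hjp; omega
    have : ((C σ * X + C γ) ^ n).coeff j = 0 :=
      coeff_eq_zero_of_natDegree_lt (lt_of_le_of_lt (linpow_natDegree_le' σ γ n) hj)
    simp only [show p - (p - j) = j by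
      simp only [Finset.mem_range] at hjp; omega, this, mul_zero]

/-- For every `t ∈ (-1,1]` and all nonnegative integers `n`, `s`,
`((1+t)/2)^s · |P_n^{(0,2s)}(t)| ≤ (2/(1+t))^s`. -/
theorem jacobiP_diag_wigner_bound (t : ℝ) (ht : t ∈ Set.Ioc (-1 : ℝ) 1)
    (n s : ℕ) :
    ((1 + t) / 2) ^ s * |jacobiP n 0 (2 * s) t| ≤ (2 / (1 + t)) ^ s := by
  obtain ⟨ht1, ht2⟩ := ht
  have ha0 : (0 : ℝ) < (1 + t) / 2 := by linarith
  have hb0 : (0 : ℝ) ≤ (1 - t) / 2 := by linarith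
  set γ := Real.sqrt ((1 + t) / 2) with hγdef
  set σ := Real.sqrt ((1 - t) / 2) with hσdef
  have hγ2 : γ ^ 2 = (1 + t) / 2 := Real.sq_sqrt ha0.le
  have hσ2 : σ ^ 2 = (1 - t) / 2 := Real.sq_sqrt hb0
  have hγσ : γ ^ 2 + σ ^ 2 = 1 := by rw [hγ2, hσ2]; ring
  have hbd := KL4 γ σ hγσ (n + 2 * s + n) (n + 2 * s) (by omega)
  rw [Aa_diag_eq t γ σ hγ2 hσ2 n s] at hbd
  have habs : |((1 + t) / 2) ^ s * jacobiP n 0 (2 * s) t| ≤ 1 := by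
    rw [← sq_le_one_iff_abs_le_one]
    exact hbd
  have h1 : ((1 + t) / 2) ^ s * |jacobiP n 0 (2 * s) t| ≤ 1 := by
    rw [← abs_of_nonneg (pow_nonneg ha0.le s), ← abs_mul]
    exact habs
  have h2 : (1 : ℝ) ≤ (2 / (1 + t)) ^ s := by
    apply one_le_pow₀
    rw [le_div_iff₀ (by linarith : (0:ℝ) < 1 + t)]
    linarith
  linarith
end

section
/- For every nonnegative integer s there exists a positive constant C such that for all integers l with l ≥ max(s,1) and all θ in the closed interval [0,π], the bound ((1+cosθ)/2)^s · |P_{l−s}^{(0,2s)}(cosθ)| ≤ C · l^{2s} holds; i.e., the diagonal Wigner d-matrix element d_{s,s}^l(θ) = ((1+cosθ)^s/2^s) · P_{l−s}^{(0,2s)}(cosθ) is bounded uniformly in θ by C · l^{2s}. -/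
open Polynomial Finset Metric

namespace Polynomial

theorem iteratedDeriv_eval {𝕜 : Type*} [NontriviallyNormedField 𝕜] (p : 𝕜[X]) (k : ℕ) :
    iteratedDeriv k (fun x => p.eval x) = fun x => (derivative^[k] p).eval x := by
  induction k generalizing p with
  | zero => rfl
  | succ k ih =>
    have hderiv : deriv (fun x => p.eval x) = fun x => p.derivative.eval x := by
      ext x; exact p.deriv
    rw [iteratedDeriv_succ', hderiv, ih, Function.iterate_succ_apply]

theorem norm_coeff_le_of_forall_mem_sphere_norm_eval_le (p : ℂ[X]) (k : ℕ) {R M : ℝ}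
    (hR : 0 < R) (hM : ∀ z ∈ sphere (0 : ℂ) R, ‖p.eval z‖ ≤ M) :
    ‖p.coeff k‖ ≤ M / R ^ k := by
  have cauchy := Complex.norm_iteratedDeriv_le_of_forall_mem_sphere_norm_le k hR
    p.differentiable.diffContOnCl hM
  rw [iteratedDeriv_eval] at cauchy
  beta_reduce at cauchy
  rw [← coeff_zero_eq_eval_zero, coeff_iterate_derivative, zero_add,
    Nat.descFactorial_self, nsmul_eq_mul, norm_mul, Complex.norm_natCast, mul_div_assoc] at cauchy
  exact le_of_mul_le_mul_left cauchy (by positivity)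

theorem coeff_C_mul_X_add_C_pow {R : Type*} [CommSemiring R] (a b : R) (n k : ℕ) :
    ((C a * X + C b) ^ n).coeff k = n.choose k * a ^ k * b ^ (n - k) := by
  have hterm : ∀ m, (C a * X) ^ m * C b ^ (n - m) * (n.choose m : R[X])
      = C (n.choose m * a ^ m * b ^ (n - m)) * X ^ m := fun m => by
    simp only [mul_pow, ← C_pow, ← C_eq_natCast, C_mul]; ring
  simp only [add_pow, hterm, finsetSum_coeff, coeff_C_mul_X_pow, sum_ite_eq, mem_range]
  split_ifs with hk
  · rfl
  · simp [Nat.choose_eq_zero_of_lt (by omega : n < k)]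

end Polynomial

noncomputable def wignerDiagPoly {R : Type*} [CommRing R] (n s : ℕ) (c σ : R) : R[X] :=
  (C c * X - C σ) ^ n * (C σ * X + C c) ^ (n + 2 * s)

theorem coeff_wignerDiagPoly {R : Type*} [CommRing R] (n s : ℕ) (c σ : R) :
    (wignerDiagPoly n s c σ).coeff n = (c ^ 2) ^ s * ∑ j ∈ range (n + 1),
      (n.choose (n - j) : R) * ((n + 2 * s).choose j : R) * (-σ ^ 2) ^ j * (c ^ 2) ^ (n - j) := by
  rw [wignerDiagPoly, sub_eq_add_neg, ← C_neg, coeff_mul, ← Nat.sum_antidiagonal_swap,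
    Nat.sum_antidiagonal_eq_sum_range_succ_mk, mul_sum]
  refine sum_congr rfl fun j hj => ?_
  have hjn : j ≤ n := Nat.lt_succ_iff.mp (mem_range.mp hj)
  simp only [Prod.swap_prod_mk, coeff_C_mul_X_add_C_pow, Nat.sub_sub_self hjn,
    show n + 2 * s - j = n - j + 2 * s by omega]
  ring

theorem norm_sq_add_norm_sq_eq_two {c σ : ℝ} (h : c ^ 2 + σ ^ 2 = 1) {z : ℂ} (hz : ‖z‖ = 1) :
    ‖c * z - σ‖ ^ 2 + ‖σ * z + c‖ ^ 2 = 2 := by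
  have hz' : z.re * z.re + z.im * z.im = 1 := by
    rw [← Complex.normSq_apply, ← Complex.sq_norm, hz, one_pow]
  simp only [Complex.sq_norm, Complex.normSq_apply, Complex.sub_re, Complex.sub_im,
    Complex.add_re, Complex.add_im, Complex.mul_re, Complex.mul_im, Complex.ofReal_re,
    Complex.ofReal_im]
  linear_combination (c ^ 2 + σ ^ 2) * hz' + 2 * h

theorem norm_eval_wignerDiagPoly_le (n s : ℕ) {c σ : ℝ} (h : c ^ 2 + σ ^ 2 = 1) {z : ℂ}
    (hz : ‖z‖ = 1) : ‖(wignerDiagPoly n s (c : ℂ) σ).eval z‖ ≤ 2 ^ s := by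
  set P := ‖c * z - σ‖
  set Q := ‖σ * z + c‖
  have hPQ : P ^ 2 + Q ^ 2 = 2 := norm_sq_add_norm_sq_eq_two h hz
  have hprod : P * Q ≤ 1 := by nlinarith [sq_nonneg (P - Q)]
  have hQ : Q ^ 2 ≤ 2 := by nlinarith [sq_nonneg P]
  calc ‖(wignerDiagPoly n s (c : ℂ) σ).eval z‖ = (P * Q) ^ n * (Q ^ 2) ^ s := by
        simp only [wignerDiagPoly, eval_mul, eval_pow, eval_sub, eval_add, eval_C, eval_X,
          norm_mul, norm_pow, P, Q]
        ring
    _ ≤ 1 ^ n * 2 ^ s := by gcongr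
    _ = 2 ^ s := by rw [one_pow, one_mul]

theorem one_add_cos_div_two_pow_mul_abs_jacobiP_le (n s : ℕ) (θ : ℝ) :
    ((1 + Real.cos θ) / 2) ^ s * |jacobiP n 0 (2 * s) (Real.cos θ)| ≤ 2 ^ s := by
  set c := Real.cos (θ / 2)
  set σ := Real.sin (θ / 2)
  have hcσ : c ^ 2 + σ ^ 2 = 1 := Real.cos_sq_add_sin_sq _
  have hcos : Real.cos θ = c ^ 2 - σ ^ 2 := by
    rw [← Real.cos_two_mul', mul_div_cancel₀ θ two_ne_zero]
  have hhalf : (1 + Real.cos θ) / 2 = c ^ 2 := by linear_combination hcos / 2 - hcσ / 2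
  have hcoeff : (((c ^ 2) ^ s * jacobiP n 0 (2 * s) (c ^ 2 - σ ^ 2) : ℝ) : ℂ)
      = (wignerDiagPoly n s (c : ℂ) σ).coeff n := by
    have hminus : (c ^ 2 - σ ^ 2 - 1) / 2 = -σ ^ 2 := by linear_combination hcσ / 2
    have hplus : (c ^ 2 - σ ^ 2 + 1) / 2 = c ^ 2 := by linear_combination -hcσ / 2
    rw [coeff_wignerDiagPoly, jacobiP, hminus, hplus, add_zero]
    push_cast
    rfl
  calc ((1 + Real.cos θ) / 2) ^ s * |jacobiP n 0 (2 * s) (Real.cos θ)|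
      = ‖(((c ^ 2) ^ s * jacobiP n 0 (2 * s) (c ^ 2 - σ ^ 2) : ℝ) : ℂ)‖ := by
        rw [hhalf, hcos, Complex.norm_real, Real.norm_eq_abs, abs_mul,
          abs_of_nonneg (by positivity : (0 : ℝ) ≤ (c ^ 2) ^ s)]
    _ ≤ 2 ^ s / 1 ^ n := by
        rw [hcoeff]
        refine norm_coeff_le_of_forall_mem_sphere_norm_eval_le _ n one_pos fun z hz => ?_
        exact norm_eval_wignerDiagPoly_le n s hcσ (mem_sphere_zero_iff_norm.mp hz)
    _ = 2 ^ s := by rw [one_pow, div_one]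

/-- For every nonnegative integer `s` there is a constant `C > 0` such that for all
`l ≥ max s 1` and all `θ ∈ [0,π]`, the diagonal Wigner d-matrix element
`d_{s,s}^l(θ) = ((1+cos θ)/2)^s · P_{l−s}^{(0,2s)}(cos θ)` is bounded by `C · l^{2s}`. -/
theorem wigner_d_diag_uniform_bound (s : ℕ) :
    ∃ C : ℝ, 0 < C ∧ ∀ l : ℕ, max s 1 ≤ l → ∀ θ ∈ Set.Icc (0 : ℝ) Real.pi,
      ((1 + Real.cos θ) / 2) ^ s * |jacobiP (l - s) 0 (2 * s) (Real.cos θ)|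
        ≤ C * (l : ℝ) ^ (2 * s) := by
  refine ⟨2 ^ s, by positivity, fun l hl θ _ => ?_⟩
  have hl1 : (1 : ℝ) ≤ l := by exact_mod_cast (le_max_right s 1).trans hl
  calc ((1 + Real.cos θ) / 2) ^ s * |jacobiP (l - s) 0 (2 * s) (Real.cos θ)|
      ≤ 2 ^ s := one_add_cos_div_two_pow_mul_abs_jacobiP_le (l - s) s θ
    _ ≤ 2 ^ s * (l : ℝ) ^ (2 * s) := le_mul_of_one_le_right (by positivity) (one_le_pow₀ hl1)
end
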